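/- Let G be a connected graph and s, t ∈ V(G) distinct nonadjacent vertices. Then d_G(s,t) = 1 if and only if λ_G(s,t) = 1. -/

import Mathlib

namespace Rendezvous

variable {V : Type*}

/-- One agent's move: stay put or move along an edge. -/
def Step (G : SimpleGraph V) (a b : V) : Prop := a = b ∨ G.Adj a b

/-- Adjacency of multisets of agent positions: there is a bijective pairing such
that every agent stays put or moves along an edge. -/
def MAdj (G : SimpleGraph V) (D D' : Multiset V) : Prop := Multiset.Rel (Step G) D D'

/-- `FWin G n a b D`: with Facilitator's agents on `a`, `b`, Divider's agents on the
multiset `D`, and Facilitator to move, Facilitator can force his two agents to meet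
within at most `n` moves, whatever Divider does. -/
def FWin (G : SimpleGraph V) : ℕ → V → V → Multiset V → Prop
  | 0, a, b, _ => a = b
  | n + 1, a, b, D => a = b ∨ ∃ a' b', Step G a a' ∧ Step G b b' ∧ a' ∉ D ∧ b' ∉ D ∧
      (a' = b' ∨ ∀ D', MAdj G D D' → a' ∉ D' → b' ∉ D' → FWin G n a' b' D')

/-- Divider with `k` agents has a winning strategy in the rendezvous game on `G`
starting from `s` and `t`: there is an initial placement from which Facilitator can
never force a meeting. -/
def DividerWins (G : SimpleGraph V) (s t : V) (k : ℕ) : Prop :=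
  ∃ D : Multiset V, Multiset.card D = k ∧ s ∉ D ∧ t ∉ D ∧ ∀ n, ¬ FWin G n s t D

/-- `d_G(s,t)`: the minimum number of Divider agents sufficient for Divider to win
(`⊤` if no number suffices, e.g. when `s = t` or `s`, `t` are adjacent). -/
noncomputable def dNum (G : SimpleGraph V) (s t : V) : ℕ∞ :=
  sInf {n : ℕ∞ | ∃ k : ℕ, (k : ℕ∞) = n ∧ DividerWins G s t k}

/-- A vertex `(s,t)`-separator: a set of vertices avoiding `s` and `t` meeting
every walk from `s` to `t`. -/
def IsSeparator (G : SimpleGraph V) (s t : V) (S : Finset V) : Prop :=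
  s ∉ S ∧ t ∉ S ∧ ∀ p : G.Walk s t, ∃ v ∈ p.support, v ∈ S

/-- `λ_G(s,t)`: minimum size of a vertex `(s,t)`-separator (`⊤` if none exists). -/
noncomputable def lambdaNum (G : SimpleGraph V) (s t : V) : ℕ∞ :=
  sInf {n : ℕ∞ | ∃ S : Finset V, (S.card : ℕ∞) = n ∧ IsSeparator G s t S}

end Rendezvous

/-!
With no agents Divider wins exactly when `s` and `t` lie in different components, which is also
exactly when `∅` separates them; so both numbers can equal `1` only for connected `s`, `t`, and
then the claim is that one Divider agent wins iff some vertex separates `s` from `t`. An agent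
parked on a separating vertex can never be passed. Conversely, let no vertex separate `s` from
`t`. Walking the agents towards each other along an `s`–`t` path either makes them meet or
*pins* the Divider agent at a vertex `y` between Facilitator's agents at neighbours `x`, `z`, and
some walk from `x` to `z` avoids `y`. Pins are won by induction on the length of that walk: both
agents advance along it, so to block them the Divider agent must enter it between them, having
made no more moves than they have, and wherever it is pinned next, its own route yields a shorter
way around. All bounds are uniform in Divider's moves, as vertices may have infinite degree.
-/

open SimpleGraph Walk

namespace SimpleGraph.Walk

variable {V : Type*} {G : SimpleGraph V}

theorem IsPath.ne_of_length_pos {u v : V} {p : G.Walk u v}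
    (hp : p.IsPath) (h : 0 < p.length) : u ≠ v :=
  fun huv => not_nil_iff_lt_length.2 h (hp.nil_iff_eq.2 huv)

theorem IsPath.append {a b c : V} {p : G.Walk a b} {q : G.Walk b c}
    (hp : p.IsPath) (hq : q.IsPath) (h : ∀ x ∈ p.support, x ∈ q.support → x = b) :
    (p.append q).IsPath := by
  have hq' := hq.support_nodup
  rw [← cons_tail_support, List.nodup_cons] at hq'
  rw [isPath_def, support_append, List.nodup_append]
  refine ⟨hp.support_nodup, hq'.2, fun v hv w hw hvw => hq'.1 ?_⟩
  subst hvw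
  exact h v hv (List.mem_of_mem_tail hw) ▸ hw

theorem IsPath.eq_of_mem_of_mem_append {a b c w : V} {p : G.Walk a b}
    {q : G.Walk b c} (h : (p.append q).IsPath) (hp : w ∈ p.support) (hq : w ∈ q.support) :
    w = b := by
  by_contra hw
  exact h.ne_of_mem_support_of_append hw hp hq rfl

theorem IsPath.notMem_of_append_cons_cons {u v x y z : V} {S₁ : G.Walk u x} {S₂ : G.Walk z v}
    {e₁ : G.Adj x y} {e₂ : G.Adj y z} (h : (S₁.append (cons e₁ (cons e₂ S₂))).IsPath) :
    y ∉ S₁.support ∧ y ∉ S₂.support := by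
  simp only [isPath_def, support_append, support_cons, List.tail_cons, List.nodup_append,
    List.nodup_cons, List.mem_cons] at h
  exact ⟨fun hy => h.2.2 y hy y (.inl rfl) rfl, h.2.1.1⟩

theorem exists_eq_append_last_mem (s : Set V) {a b : V} (p : G.Walk a b)
    (hp : ∃ x ∈ p.support, x ∈ s) :
    ∃ w ∈ s, ∃ (q : G.Walk a w) (r : G.Walk w b),
      p = q.append r ∧ ∀ x ∈ r.support, x ∈ s → x = w := by
  induction p with
  | nil =>
    obtain ⟨x, hx, hxs⟩ := hp
    rw [support_nil, List.mem_singleton] at hx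
    subst hx
    exact ⟨_, hxs, nil, nil, rfl, by simp⟩
  | @cons a c b h p ih =>
    by_cases hp' : ∃ x ∈ p.support, x ∈ s
    · obtain ⟨w, hw, q, r, rfl, hr⟩ := ih hp'
      exact ⟨w, hw, .cons h q, r, rfl, hr⟩
    · push Not at hp'
      have hmem : ∀ x ∈ (cons h p).support, x ∈ s → x = a := by
        simp only [support_cons, List.mem_cons]
        rintro x (rfl | hx) hxs
        exacts [rfl, absurd hxs (hp' x hx)]
      obtain ⟨x, hx, hxs⟩ := hp
      exact ⟨a, hmem x hx hxs ▸ hxs, nil, cons h p, rfl, hmem⟩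

theorem exists_eq_cons_concat {u v : V} (p : G.Walk u v) (hp : 2 ≤ p.length) :
    ∃ (c w : V) (h : G.Adj u c) (q : G.Walk c w) (e : G.Adj w v), p = cons h (q.concat e) := by
  cases p with
  | nil => simp at hp
  | cons h p =>
    cases p with
    | nil => simp at hp
    | cons h' p =>
      obtain ⟨w, q, e, hq⟩ := exists_cons_eq_concat h' p
      exact ⟨_, w, h, q, e, hq ▸ rfl⟩

theorem mem_support_of_append_eq_concat {a b c w : V} {p : G.Walk a b} {q : G.Walk b c}
    {r : G.Walk a w} {f : G.Adj w c} (h : p.append q = r.concat f) (hq : ¬ q.Nil) :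
    w ∈ q.support := by
  cases q with
  | nil => exact absurd .nil hq
  | cons h' q =>
    obtain ⟨_, T, f', hT⟩ := exists_cons_eq_concat h' q
    rw [hT, append_concat] at h
    obtain ⟨rfl, -⟩ := concat_inj h
    simp [hT]

end SimpleGraph.Walk

namespace Rendezvous

variable {V : Type*} {G : SimpleGraph V}

theorem Step.exists_walk {a b : V} (h : Step G a b) :
    ∃ p : G.Walk a b, p.length ≤ 1 ∧ ∀ w ∈ p.support, w = a ∨ w = b := by
  rcases h with rfl | h
  · exact ⟨nil, by simp, by simp⟩
  · exact ⟨h.toWalk, by simp, by simp⟩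

theorem madj_refl (D : Multiset V) : MAdj G D D :=
  Multiset.rel_refl_of_refl_on fun _ _ => Or.inl rfl

theorem madj_singleton {d : V} {D' : Multiset V} (h : MAdj G {d} D') :
    ∃ d', Step G d d' ∧ D' = {d'} := by
  rw [MAdj, ← Multiset.cons_zero, Multiset.rel_cons_left] at h
  obtain ⟨d', D'', hd, hD, rfl⟩ := h
  rw [Multiset.rel_zero_left.mp hD]
  exact ⟨d', hd, rfl⟩

theorem FWin.of_eq {n : ℕ} {a b : V} {D : Multiset V} (h : a = b) : FWin G n a b D := by
  cases n with
  | zero => exact h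
  | succ n => exact Or.inl h

theorem FWin.mono {n m : ℕ} {a b : V} {D : Multiset V} (h : FWin G n a b D) (hnm : n ≤ m) :
    FWin G m a b D := by
  induction n generalizing m a b D with
  | zero => exact FWin.of_eq h
  | succ n ih =>
    obtain ⟨m, rfl⟩ : ∃ m', m = m' + 1 := ⟨m - 1, by omega⟩
    rcases h with h | ⟨a', b', sa, sb, ha, hb, h | h⟩
    · exact FWin.of_eq h
    · exact Or.inr ⟨a', b', sa, sb, ha, hb, Or.inl h⟩
    · exact Or.inr ⟨a', b', sa, sb, ha, hb,
        Or.inr fun D' hD ha' hb' => ih (h D' hD ha' hb') (by omega)⟩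

theorem FWin.reachable {n : ℕ} {a b : V} {D : Multiset V} (h : FWin G n a b D) :
    G.Reachable a b := by
  have step {a b : V} (h : Step G a b) : G.Reachable a b := by
    obtain ⟨p, -⟩ := h.exists_walk
    exact ⟨p⟩
  induction n generalizing a b with
  | zero => exact h ▸ .rfl
  | succ n ih =>
    rcases h with rfl | ⟨a', b', sa, sb, ha, hb, h⟩
    · rfl
    · have hab : G.Reachable a' b' := h.elim (· ▸ .rfl) fun h => ih (h D (madj_refl D) ha hb)
      exact (step sa).trans (hab.trans (step sb).symm)

theorem fwin_zero_of_walk {a b : V} (p : G.Walk a b) : FWin G p.length a b 0 := by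
  induction p with
  | nil => rfl
  | cons h p ih =>
    refine Or.inr ⟨_, _, Or.inr h, Or.inl rfl, by simp, by simp, Or.inr fun D' hD _ _ => ?_⟩
    rwa [Multiset.rel_zero_left.mp hD]

theorem fwin_succ_singleton {n : ℕ} {a b a' b' d : V} (sa : Step G a a') (sb : Step G b b')
    (ha : a' ≠ d) (hb : b' ≠ d)
    (h : ∀ d', Step G d d' → d' ≠ a' → d' ≠ b' → FWin G n a' b' {d'}) :
    FWin G (n + 1) a b {d} := by
  refine Or.inr ⟨a', b', sa, sb, by simpa using ha, by simpa using hb,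
    Or.inr fun D' hD ha' hb' => ?_⟩
  obtain ⟨d', hd, rfl⟩ := madj_singleton hD
  simp only [Multiset.mem_singleton] at ha' hb'
  exact h d' hd (Ne.symm ha') (Ne.symm hb')

theorem fwin_one_of_step {a b c d : V} (sa : Step G a c) (sb : Step G b c) (hc : c ≠ d) :
    FWin G 1 a b {d} :=
  Or.inr ⟨c, c, sa, sb, by simpa using hc, by simpa using hc, Or.inl rfl⟩

theorem fwin_one_of_length_le_two {u v d : V} (M : G.Walk u v) (hM : M.length ≤ 2)
    (hd : d ∉ M.support) : FWin G 1 u v {d} := by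
  have hne : ∀ w ∈ M.support, w ≠ d := fun w hw h => hd (h ▸ hw)
  match M, hM with
  | nil, _ => exact FWin.of_eq rfl
  | cons h nil, _ => exact fwin_one_of_step (Or.inr h) (Or.inl rfl) (hne _ (by simp))
  | cons h (cons h' nil), _ => exact fwin_one_of_step (Or.inr h) (Or.inr h'.symm) (hne _ (by simp))

theorem Step.forall_mem_support {a b a' b' v : V} (sa : Step G a a') (sb : Step G b b')
    (ha : a ≠ v) (ha' : a' ≠ v) (hb : b ≠ v) (hb' : b' ≠ v)
    (hsep : ∀ p : G.Walk a b, v ∈ p.support) (q : G.Walk a' b') : v ∈ q.support := by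
  obtain ⟨p₁, -, hp₁⟩ := sa.exists_walk
  obtain ⟨p₂, -, hp₂⟩ := sb.exists_walk
  have := hsep (p₁.append (q.append p₂.reverse))
  simp only [mem_support_append_iff, support_reverse, List.mem_reverse] at this
  rcases this with h | h | h
  · rcases hp₁ v h with rfl | rfl <;> contradiction
  · exact h
  · rcases hp₂ v h with rfl | rfl <;> contradiction

theorem not_fwin_of_forall_mem_support {v : V} {n : ℕ} {a b : V} (ha : a ≠ v) (hb : b ≠ v)
    (hsep : ∀ p : G.Walk a b, v ∈ p.support) : ¬ FWin G n a b {v} := by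
  have hab : a ≠ b := by
    rintro rfl
    simpa [Ne.symm ha] using hsep nil
  induction n generalizing a b with
  | zero => exact hab
  | succ n ih =>
    rintro (h | ⟨a', b', sa, sb, ha', hb', h⟩)
    · exact hab h
    · simp only [Multiset.mem_singleton] at ha' hb'
      have hsep' := sa.forall_mem_support sb ha ha' hb hb' hsep
      have hab' : a' ≠ b' := by
        rintro rfl
        simpa [Ne.symm ha'] using hsep' nil
      exact h.elim hab' fun h => ih ha' hb' hsep' hab' (h {v} (madj_refl _) (by simpa) (by simpa))

theorem dividerWins_one_of_isSeparator {s t v : V} (h : IsSeparator G s t {v}) :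
    DividerWins G s t 1 := by
  obtain ⟨hs, ht, hsep⟩ := h
  simp only [Finset.mem_singleton] at hs ht hsep
  refine ⟨{v}, rfl, by simpa, by simpa, fun n => not_fwin_of_forall_mem_support hs ht ?_⟩
  intro p
  obtain ⟨w, hw, rfl⟩ := hsep p
  exact hw

def Consecutive {u v : V} (S : G.Walk u v) (x y z : V) : Prop :=
  ∃ (e₁ : G.Adj x y) (e₂ : G.Adj y z) (S₁ : G.Walk u x) (S₂ : G.Walk z v),
    S = S₁.append (cons e₁ (cons e₂ S₂))

theorem Consecutive.cons {u v w x y z : V} {S : G.Walk v w} (h : G.Adj u v)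
    (hc : Consecutive S x y z) : Consecutive (cons h S) x y z := by
  obtain ⟨e₁, e₂, S₁, S₂, rfl⟩ := hc
  exact ⟨e₁, e₂, .cons h S₁, S₂, rfl⟩

theorem Consecutive.concat {u v w x y z : V} {S : G.Walk u v} (hc : Consecutive S x y z)
    (h : G.Adj v w) : Consecutive (S.concat h) x y z := by
  obtain ⟨e₁, e₂, S₁, S₂, rfl⟩ := hc
  exact ⟨e₁, e₂, S₁, S₂.concat h, by rw [← append_concat, concat_cons, concat_cons]⟩

theorem Consecutive.of_concat {u v w x y z : V} {S : G.Walk u w} {h : G.Adj w v}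
    (hc : Consecutive (S.concat h) x y z) :
    Consecutive S x y z ∨
      y = w ∧ z = v ∧ ∃ (f : G.Adj x w) (S' : G.Walk u x), S = S'.concat f := by
  obtain ⟨e₁, e₂, S₁, S₂, hS⟩ := hc
  cases S₂ with
  | nil =>
    rw [← concat_append, ← concat_eq_append] at hS
    obtain ⟨rfl, hS⟩ := concat_inj hS
    exact Or.inr ⟨rfl, rfl, e₁, S₁, hS⟩
  | cons f S₂ =>
    obtain ⟨_, T, f', hT⟩ := exists_cons_eq_concat f S₂
    rw [hT, ← concat_cons, ← concat_cons, append_concat] at hS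
    obtain ⟨rfl, hS⟩ := concat_inj hS
    exact Or.inl ⟨e₁, e₂, S₁, T, hS⟩

/-- One-sided squeeze: the agent at `u` walks towards `v` along `S`, except when the
Divider agent stands right in front of it, in which case the agent at `v` steps back. -/
theorem fwin_of_forall_consecutive {N : ℕ} {u v d : V} (S : G.Walk u v) (hS : S.IsPath)
    (hpins : ∀ x y z, Consecutive S x y z → FWin G N x z {y}) (hdu : d ≠ u) (hdv : d ≠ v) :
    FWin G (S.length + N + 2) u v {d} := by
  induction hn : S.length using Nat.strong_induction_on generalizing u v S d with
  | _ n ih =>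
  subst hn
  cases S with
  | nil => exact FWin.of_eq rfl
  | @cons _ c _ h S =>
    cases S with
    | nil => exact (fwin_one_of_step (Or.inr h) (Or.inl rfl) hdv.symm).mono (by simp)
    | cons h' S =>
      by_cases hdc : d = c
      · subst hdc
        cases S with
        | nil => exact (hpins _ _ _ ⟨h, h', nil, nil, rfl⟩).mono (by simp; omega)
        | cons h'' S =>
          obtain ⟨w, q, e, hq⟩ := exists_cons_eq_concat h' (cons h'' S)
          have hqlen : q.length = S.length + 1 := by simpa using (congrArg length hq).symm
          rw [hq, ← concat_cons] at hS hpins ⊢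
          have hqS := ((concat_isPath_iff e).1 hS).1
          have hdw : d ≠ w := hqS.of_cons.ne_of_length_pos (by omega)
          refine (fwin_succ_singleton (Or.inl rfl) (Or.inr e.symm) h.ne hdw.symm
            fun d' _ hd'u hd'w => ih _ (by simp; omega) (.cons h q) hqS
              (fun x y z hc => hpins x y z (hc.concat e)) hd'u hd'w rfl).mono (by simp)
      · refine (fwin_succ_singleton (Or.inr h) (Or.inl rfl) (Ne.symm hdc) hdv.symm
          fun d' _ hd'c hd'v => ih _ (by simp) (.cons h' S) hS.of_cons
            (fun x y z hc => hpins x y z (hc.cons h)) hd'c hd'v rfl).mono (by simp)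

def HasDetour (G : SimpleGraph V) (k : ℕ) (x y z : V) : Prop :=
  ∃ R : G.Walk x z, y ∉ R.support ∧ R.length ≤ k

theorem HasDetour.mono {k k' : ℕ} {x y z : V} (h : HasDetour G k x y z) (hk : k ≤ k') :
    HasDetour G k' x y z :=
  let ⟨R, hy, hR⟩ := h
  ⟨R, hy, hR.trans hk⟩

/-- Every *pin* (the Divider agent at `y`, Facilitator's agents at its neighbours `x`, `z`) that
can be walked around in `k` steps is won within `N` moves. -/
def PinsWin (G : SimpleGraph V) (k N : ℕ) : Prop :=
  ∀ ⦃x y z : V⦄, G.Adj x y → G.Adj y z → HasDetour G k x y z → FWin G N x z {y}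

theorem Consecutive.hasDetour {u v x y z : V} {S : G.Walk u v} (hS : S.IsPath) (h : G.Adj u v)
    (hc : Consecutive S x y z) : HasDetour G (S.length - 1) x y z := by
  obtain ⟨e₁, e₂, S₁, S₂, rfl⟩ := hc
  obtain ⟨h₁, h₂⟩ := hS.notMem_of_append_cons_cons
  refine ⟨S₁.reverse.append (Walk.cons h S₂.reverse), ?_, by simp⟩
  have hu : y ≠ u := fun hy => h₁ (hy ▸ S₁.start_mem_support)
  simp [mem_support_append_iff, h₁, h₂, hu]

/-- Squeeze along `ρ` followed by the edge `g z`: pins inside `ρ` are walked around through the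
chord `x g`. -/
theorem PinsWin.fwin_of_corridor {k N : ℕ} (hpin : PinsWin G k N) {x g z : V} (e₁ : G.Adj x g)
    (e₂ : G.Adj g z) (ρ : G.Walk x g) (hρ : ρ.IsPath) (hz : z ∉ ρ.support)
    (hlen : ρ.length ≤ k + 1)
    (hlast : ∀ w (f : G.Adj w g) (ρ' : G.Walk x w), ρ = ρ'.concat f → HasDetour G k w g z) :
    FWin G (k + N + 4) x z {g} := by
  refine (fwin_of_forall_consecutive (N := N) _ (hρ.concat hz e₂) (fun x' y' z' hc => ?_)
    e₁.ne.symm e₂.ne).mono (by simp; omega)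
  rcases hc.of_concat with hc | ⟨rfl, rfl, f, ρ', hρ'⟩
  · obtain ⟨f₁, f₂, -⟩ := id hc
    exact hpin f₁ f₂ ((hc.hasDetour hρ e₁).mono (by omega))
  · exact hpin f e₂ (hlast _ f ρ' hρ')

/-- The Divider agent, pinned at `g`, arrived there along `W`. The corridor runs from `x` back
along `L` to the last vertex of `W` on `L`, then along `W` to `g`; its vertex before `g` lies on
`W`, from where `W` and `R` lead around `g` to `z`. -/
theorem PinsWin.fwin_of_theta {k N : ℕ} (hpin : PinsWin G k N) {x y g z : V} (e₁ : G.Adj x g)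
    (e₂ : G.Adj g z) (L : G.Walk y x) (hL : L.IsPath) (hgL : g ∉ L.support) (R : G.Walk y z)
    (hgR : g ∉ R.support) (W : G.Walk y g) (h₁ : L.length + W.length ≤ k + 1)
    (h₂ : W.length + R.length ≤ k) : FWin G (k + N + 4) x z {g} := by
  classical
  obtain ⟨w₀, hw₀, q, P, hWP, hP⟩ :=
    W.bypass.exists_eq_append_last_mem {v | v ∈ L.support}
      ⟨y, W.bypass.start_mem_support, L.start_mem_support⟩
  have hWb : (q.append P).IsPath := hWP ▸ W.bypass_isPath
  have hWlen : q.length + P.length ≤ W.length := by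
    simpa [← length_append, ← hWP] using W.length_bypass_le_length
  set ρ := (L.dropUntil w₀ hw₀).reverse.append P
  have hρ : ρ.IsPath := by
    refine (hL.dropUntil hw₀).reverse.append hWb.of_append_right fun v hv hvP => hP v hvP ?_
    simpa using L.support_dropUntil_subset_support hw₀ (by simpa using hv)
  have hρlen : ρ.length ≤ k + 1 := by
    have := L.length_dropUntil_le_length hw₀
    simp only [ρ, length_append, length_reverse]
    omega
  by_cases hz : z ∈ ρ.support
  · refine (hpin e₁ e₂
      ⟨ρ.takeUntil z hz, endpoint_notMem_support_takeUntil hρ hz e₂.ne, ?_⟩).mono (by omega)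
    have := ρ.length_takeUntil_lt_length hz e₂.ne.symm
    omega
  refine hpin.fwin_of_corridor e₁ e₂ ρ hρ hz hρlen fun w f ρ' hρ' => ?_
  have hP : ¬ P.Nil := fun hn => hgL (hn.eq ▸ hw₀)
  have hw : w ∈ W.bypass.support := by
    rw [hWP, mem_support_append_iff]
    exact .inr (mem_support_of_append_eq_concat hρ' hP)
  refine ⟨(W.bypass.takeUntil w hw).reverse.append R, ?_, ?_⟩
  · simp [mem_support_append_iff, endpoint_notMem_support_takeUntil W.bypass_isPath hw f.ne', hgR]
  · have := W.bypass.length_takeUntil_le_length hw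
    have := W.length_bypass_le_length
    simp only [length_append, length_reverse]
    omega

/-- Facilitator's agents at `u`, `v` have advanced equally far along a path from `x` to `z`
avoiding `y`. -/
structure IsSqueeze (y : V) {x u v z : V} (PL : G.Walk x u) (M : G.Walk u v) (PR : G.Walk v z) :
    Prop where
  isPath : (PL.append (M.append PR)).IsPath
  notMem : y ∉ (PL.append (M.append PR)).support
  length_eq : PL.length = PR.length

namespace IsSqueeze

variable {x y z u v w : V} {PL : G.Walk x u} {M : G.Walk u v} {PR : G.Walk v z}

theorem isPath_mid (h : IsSqueeze y PL M PR) : M.IsPath :=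
  h.isPath.of_append_right.of_append_left

theorem ne_of_mem_mid (h : IsSqueeze y PL M PR) (hw : w ∈ M.support) : w ≠ y := by
  rintro rfl
  exact h.notMem (by simp [mem_support_append_iff, hw])

theorem notMem_left (h : IsSqueeze y PL M PR) (hw : w ∈ M.support) (hwu : w ≠ u) :
    w ∉ PL.support :=
  fun hw' => hwu (h.isPath.eq_of_mem_of_mem_append hw' (by simp [mem_support_append_iff, hw]))

theorem notMem_right (h : IsSqueeze y PL M PR) (hw : w ∈ M.support) (hwv : w ≠ v) :
    w ∉ PR.support :=
  fun hw' => hwv (h.isPath.of_append_right.eq_of_mem_of_mem_append hw hw')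

theorem advance {c w : V} {h : G.Adj u c} {q : G.Walk c w} {e : G.Adj w v}
    (hsq : IsSqueeze y PL (.cons h (q.concat e)) PR) :
    IsSqueeze y (PL.concat h) q (.cons e PR) := by
  have hre : (PL.concat h).append (q.append (.cons e PR)) =
      PL.append ((Walk.cons h (q.concat e)).append PR) := by
    rw [concat_append, cons_append, concat_append]
  exact ⟨hre ▸ hsq.isPath, hre ▸ hsq.notMem, by simp [hsq.length_eq]⟩

theorem hasDetour_of_mem_left {k : ℕ} {x' y' z' g : V} {e₁ : G.Adj x' y'} {e₂ : G.Adj y' z'}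
    {SL : G.Walk u x'} {SR : G.Walk z' v} (hsq : IsSqueeze y PL M PR)
    (hM : M = SL.append (.cons e₁ (.cons e₂ SR))) (hyz : G.Adj y z)
    (hlen : PL.length + M.length + PR.length ≤ k + 1) (W : G.Walk y g)
    (hW : W.length ≤ PL.length) (hy'W : y' ∉ W.support) (hg : g ∈ SL.support) :
    HasDetour G k x' y' z' := by
  classical
  subst hM
  obtain ⟨hSL, hSR⟩ := hsq.isPath_mid.notMem_of_append_cons_cons
  have hy' : y' ∈ (SL.append (.cons e₁ (.cons e₂ SR))).support := by
    simp [mem_support_append_iff]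
  have hy'v : y' ≠ v := fun h => hSR (h ▸ SR.end_mem_support)
  have hdrop : y' ∉ (SL.dropUntil g hg).support :=
    fun h => hSL (SL.support_dropUntil_subset_support hg h)
  refine ⟨(SL.dropUntil g hg).reverse.append
    (W.reverse.append (.cons hyz (PR.reverse.append SR.reverse))), ?_, ?_⟩
  · simp [mem_support_append_iff, hsq.ne_of_mem_mid hy', hsq.notMem_right hy' hy'v, hy'W, hSR,
      hdrop]
  · have := SL.length_dropUntil_le_length hg
    simp only [length_append, length_reverse, length_cons, hsq.length_eq] at hlen hW ⊢
    omega

theorem hasDetour_of_mem_right {k : ℕ} {x' y' z' g : V} {e₁ : G.Adj x' y'} {e₂ : G.Adj y' z'}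
    {SL : G.Walk u x'} {SR : G.Walk z' v} (hsq : IsSqueeze y PL M PR)
    (hM : M = SL.append (.cons e₁ (.cons e₂ SR))) (hxy : G.Adj x y)
    (hlen : PL.length + M.length + PR.length ≤ k + 1) (W : G.Walk y g)
    (hW : W.length ≤ PL.length) (hy'W : y' ∉ W.support) (hg : g ∈ SR.support) :
    HasDetour G k x' y' z' := by
  classical
  subst hM
  obtain ⟨hSL, hSR⟩ := hsq.isPath_mid.notMem_of_append_cons_cons
  have hy' : y' ∈ (SL.append (.cons e₁ (.cons e₂ SR))).support := by
    simp [mem_support_append_iff]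
  have hPL := hsq.notMem_left hy' fun h => hSL (h ▸ SL.start_mem_support)
  have hy'x : y' ≠ x := fun h => hPL (h ▸ PL.start_mem_support)
  have htake : y' ∉ (SR.takeUntil g hg).support :=
    fun h => hSR (SR.support_takeUntil_subset_support hg h)
  refine ⟨SL.reverse.append
    (PL.reverse.append (.cons hxy (W.append (SR.takeUntil g hg).reverse))), ?_, ?_⟩
  · simp [mem_support_append_iff, hPL, hy'W, hSL, hy'x, htake]
  · have := SR.length_takeUntil_le_length hg
    simp only [length_append, length_reverse, length_cons, hsq.length_eq] at hlen hW ⊢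
    omega

theorem fwin_of_pinned_at_entry {k N : ℕ} {x' g z' : V} {e₁ : G.Adj x' g} {e₂ : G.Adj g z'}
    {SL : G.Walk u x'} {SR : G.Walk z' v} (hsq : IsSqueeze y PL M PR) (hpin : PinsWin G k N)
    (hM : M = SL.append (.cons e₁ (.cons e₂ SR))) (hxy : G.Adj x y)
    (hyz : G.Adj y z) (hlen : PL.length + M.length + PR.length ≤ k + 1) (W : G.Walk y g)
    (hW : W.length ≤ PL.length) : FWin G (k + N + 4) x' z' {g} := by
  subst hM
  obtain ⟨hSL, hSR⟩ := hsq.isPath_mid.notMem_of_append_cons_cons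
  have hg : g ∈ (SL.append (.cons e₁ (.cons e₂ SR))).support := by
    simp [mem_support_append_iff]
  have hgu : g ≠ u := fun h => hSL (h ▸ SL.start_mem_support)
  have hgv : g ≠ v := fun h => hSR (h ▸ SR.end_mem_support)
  have hL : (Walk.cons hxy.symm (PL.append SL)).IsPath := by
    have hpath := hsq.isPath
    have hy := hsq.notMem
    rw [← append_assoc, append_assoc] at hpath hy
    exact hpath.of_append_left.cons (fun h => hy (by simp [mem_support_append_iff, h]))
  refine hpin.fwin_of_theta e₁ e₂ _ hL ?_ (.cons hyz (PR.reverse.append SR.reverse)) ?_ W ?_ ?_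
  · simp [mem_support_append_iff, hsq.ne_of_mem_mid hg, hsq.notMem_left hg hgu, hSL]
  · simp [mem_support_append_iff, hsq.ne_of_mem_mid hg, hsq.notMem_right hg hgv, hSR]
  all_goals
    simp only [length_append, length_reverse, length_cons, hsq.length_eq] at hlen hW ⊢
    omega

end IsSqueeze

theorem PinsWin.fwin_of_entered_squeeze {k N : ℕ} (hpin : PinsWin G k N) {x y z u v g : V}
    (hxy : G.Adj x y) (hyz : G.Adj y z) {PL : G.Walk x u} {M : G.Walk u v} {PR : G.Walk v z}
    (hsq : IsSqueeze y PL M PR) (hlen : PL.length + M.length + PR.length ≤ k + 1)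
    (W : G.Walk y g) (hW : W.length ≤ PL.length)
    (hWM : ∀ w ∈ W.support, w ∈ M.support → w = g) (hgM : g ∈ M.support) (hgu : g ≠ u)
    (hgv : g ≠ v) : FWin G (2 * k + N + 7) u v {g} := by
  refine (fwin_of_forall_consecutive (N := k + N + 4) M hsq.isPath_mid (fun x' y' z' hc => ?_)
    hgu hgv).mono (by omega)
  obtain ⟨e₁, e₂, SL, SR, hM⟩ := hc
  obtain ⟨hSL, hSR⟩ := (hM ▸ hsq.isPath_mid).notMem_of_append_cons_cons
  have hy'W (hne : y' ≠ g) : y' ∉ W.support :=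
    fun hy' => hne (hWM y' hy' (by simp [hM, mem_support_append_iff]))
  have hg : g ∈ SL.support ∨ g = y' ∨ g ∈ SR.support := by
    simp only [hM, mem_support_append_iff, support_cons, List.mem_cons] at hgM
    rcases hgM with hg | rfl | hg | hg
    exacts [.inl hg, .inl SL.end_mem_support, .inr (.inl hg), .inr (.inr hg)]
  rcases hg with hg | rfl | hg
  · refine (hpin e₁ e₂ ?_).mono (by omega)
    exact hsq.hasDetour_of_mem_left hM hyz hlen W hW (hy'W fun h => hSL (h ▸ hg)) hg
  · exact hsq.fwin_of_pinned_at_entry hpin hM hxy hyz hlen W hW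
  · refine (hpin e₁ e₂ ?_).mono (by omega)
    exact hsq.hasDetour_of_mem_right hM hxy hlen W hW (hy'W fun h => hSR (h ▸ hg)) hg

/-- Balanced squeeze: both agents advance towards each other along the middle path `M`.
`W` records the Divider agent's walk since leaving `y`; as it has had no more moves than the
agents, once it enters `M` it can be walked around cheaply. -/
theorem PinsWin.fwin_of_squeeze {k N : ℕ} (hpin : PinsWin G k N) {x y z : V} (hxy : G.Adj x y)
    (hyz : G.Adj y z) (m : ℕ) {u v d : V} {PL : G.Walk x u} {M : G.Walk u v} {PR : G.Walk v z}
    (hsq : IsSqueeze y PL M PR) (hlen : PL.length + M.length + PR.length ≤ k + 1)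
    (hm : M.length ≤ m) (W : G.Walk y d) (hW : W.length ≤ PL.length)
    (hWM : ∀ w ∈ W.support, w ∉ M.support) : FWin G (m + (2 * k + N + 7) + 2) u v {d} := by
  induction m generalizing u v d PL M PR W with
  | zero => exact FWin.of_eq (M.eq_of_length_eq_zero (by omega))
  | succ m ih =>
  have hd : d ∉ M.support := hWM d W.end_mem_support
  by_cases hM : M.length ≤ 2
  · exact (fwin_one_of_length_le_two M hM hd).mono (by omega)
  obtain ⟨c, w, h, q, e, rfl⟩ := M.exists_eq_cons_concat (by omega)
  have hqM : ∀ w' ∈ q.support, w' ∈ (Walk.cons h (q.concat e)).support :=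
    fun w' hw' => by simp [hw']
  have hne (w') (hw' : w' ∈ q.support) : w' ≠ d := fun h => hd (h ▸ hqM w' hw')
  refine (fwin_succ_singleton (n := m + (2 * k + N + 7) + 2) (Or.inr h) (Or.inr e.symm)
    (hne _ q.start_mem_support) (hne _ q.end_mem_support) fun d' hdd' hd'c hd'w => ?_).mono
    (by omega)
  obtain ⟨Wd, hWdlen, hWd⟩ := hdd'.exists_walk
  have hW' : ∀ w' ∈ (W.append Wd).support, w' ∈ q.support → w' = d' := by
    intro w' hw' hw'q
    rcases (mem_support_append_iff _ _).1 hw' with hw' | hw'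
    · exact absurd (hqM w' hw'q) (hWM w' hw')
    · exact (hWd w' hw').resolve_left (hne w' hw'q)
  have hW'len : (W.append Wd).length ≤ (PL.concat h).length := by simp; omega
  have hlen' : (PL.concat h).length + q.length + (Walk.cons e PR).length ≤ k + 1 := by
    simp only [length_concat, length_cons] at hlen ⊢
    omega
  by_cases hd' : d' ∈ q.support
  · exact (hpin.fwin_of_entered_squeeze hxy hyz hsq.advance hlen' _ hW'len hW' hd' hd'c hd'w).mono
      (by omega)
  · exact ih hsq.advance hlen' (by simp at hm; omega) _ hW'len
      fun w' hw' hw'q => hd' (hW' w' hw' hw'q ▸ hw'q)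

theorem PinsWin.succ {k N : ℕ} (hpin : PinsWin G k N) : PinsWin G (k + 1) (3 * k + N + 10) := by
  classical
  rintro x y z hxy hyz ⟨R, hyR, hRlen⟩
  have hyRb : y ∉ R.bypass.support := fun h => hyR (R.support_bypass_subset_support h)
  have hsq : IsSqueeze y (nil : G.Walk x x) R.bypass nil :=
    ⟨by simpa using R.bypass_isPath, by simpa using hyRb, rfl⟩
  have := R.length_bypass_le_length
  exact (hpin.fwin_of_squeeze hxy hyz (k + 1) hsq (by simp; omega) (by omega) nil le_rfl
    (by simpa using hyRb)).mono (by omega)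

theorem exists_pinsWin (k : ℕ) : ∃ N, PinsWin G k N := by
  induction k with
  | zero =>
    exact ⟨0, fun x y z _ _ ⟨R, _, hR⟩ => FWin.of_eq (R.eq_of_length_eq_zero (by omega))⟩
  | succ k ih =>
    obtain ⟨N, hN⟩ := ih
    exact ⟨_, hN.succ⟩

theorem exists_fwin_of_forall_exists_walk {s t d : V} (p : G.Walk s t)
    (havoid : ∀ w, w ≠ s → w ≠ t → ∃ q : G.Walk s t, w ∉ q.support) (hds : d ≠ s)
    (hdt : d ≠ t) :
    ∃ n, FWin G n s t {d} := by
  classical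
  have : Nonempty (G.Walk s t) := ⟨p⟩
  choose! q hq using havoid
  set P := p.bypass
  obtain ⟨N, hN⟩ :=
    exists_pinsWin (G := G) (P.length + P.support.toFinset.sup fun w => (q w).length)
  refine ⟨_, fwin_of_forall_consecutive (N := N) P p.bypass_isPath (fun x y z hc => ?_) hds hdt⟩
  obtain ⟨e₁, e₂, S₁, S₂, hP⟩ := hc
  have hPp : P.IsPath := p.bypass_isPath
  rw [hP] at hPp
  obtain ⟨h₁, h₂⟩ := hPp.notMem_of_append_cons_cons
  have hys : y ≠ s := fun h => h₁ (h ▸ S₁.start_mem_support)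
  have hyt : y ≠ t := fun h => h₂ (h ▸ S₂.end_mem_support)
  refine hN e₁ e₂ ⟨S₁.reverse.append ((q y).append S₂.reverse), ?_, ?_⟩
  · simp [mem_support_append_iff, h₁, h₂, hq y hys hyt]
  · have hyP : y ∈ P.support := by rw [hP]; simp [mem_support_append_iff]
    have := Finset.le_sup (f := fun w => (q w).length) (List.mem_toFinset.2 hyP)
    have := congrArg length hP
    simp only [length_append, length_reverse, length_cons] at this ⊢
    omega

theorem exists_isSeparator_singleton_of_dividerWins_one {s t : V} (hr : G.Reachable s t)
    (h : DividerWins G s t 1) : ∃ v, IsSeparator G s t {v} := by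
  by_contra! hsep
  obtain ⟨D, hD, hsD, htD, hwin⟩ := h
  obtain ⟨d, rfl⟩ := Multiset.card_eq_one.mp hD
  obtain ⟨p⟩ := hr
  have havoid (w : V) (hws : w ≠ s) (hwt : w ≠ t) : ∃ q : G.Walk s t, w ∉ q.support := by
    by_contra! hq
    exact hsep w
      ⟨by simpa using hws.symm, by simpa using hwt.symm, fun q => ⟨w, hq q, by simp⟩⟩
  obtain ⟨n, hn⟩ := exists_fwin_of_forall_exists_walk p havoid (by simpa [eq_comm] using hsD)
    (by simpa [eq_comm] using htD)
  exact hwin n hn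

theorem dividerWins_zero_iff {s t : V} : DividerWins G s t 0 ↔ ¬ G.Reachable s t := by
  constructor
  · rintro ⟨D, hD, -, -, h⟩ ⟨p⟩
    rw [Multiset.card_eq_zero.mp hD] at h
    exact h _ (fwin_zero_of_walk p)
  · exact fun h => ⟨0, rfl, by simp, by simp, fun n hn => h hn.reachable⟩

theorem isSeparator_empty_iff {s t : V} : IsSeparator G s t ∅ ↔ ¬ G.Reachable s t := by
  simp [IsSeparator, Reachable, isEmpty_iff]

theorem sInf_natCast_eq_one_iff {α : Type*} (f : α → ℕ) (P : α → Prop) :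
    sInf {n : ℕ∞ | ∃ a, (f a : ℕ∞) = n ∧ P a} = 1 ↔
      (∃ a, f a = 1 ∧ P a) ∧ ∀ a, P a → f a ≠ 0 := by
  set A := {n : ℕ∞ | ∃ a, (f a : ℕ∞) = n ∧ P a}
  constructor
  · intro h
    have hne : A.Nonempty := Set.nonempty_iff_ne_empty.mpr fun h' => by simp [h'] at h
    obtain ⟨a, ha, hPa⟩ := h ▸ csInf_mem hne
    refine ⟨⟨a, by exact_mod_cast ha, hPa⟩, fun b hb hb0 => ?_⟩
    have := h ▸ sInf_le (show (f b : ℕ∞) ∈ A from ⟨b, rfl, hb⟩)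
    simp [hb0] at this
  · rintro ⟨⟨a, ha, hPa⟩, h0⟩
    refine le_antisymm (sInf_le ⟨a, by simp [ha], hPa⟩) (le_sInf ?_)
    rintro _ ⟨b, rfl, hb⟩
    exact_mod_cast Nat.one_le_iff_ne_zero.mpr (h0 b hb)

theorem dNum_eq_one_iff {s t : V} : dNum G s t = 1 ↔ DividerWins G s t 1 ∧ G.Reachable s t := by
  rw [dNum, sInf_natCast_eq_one_iff (fun k : ℕ => k), ← dividerWins_zero_iff.not_left]
  exact ⟨fun ⟨⟨_, h1, h⟩, h0⟩ => ⟨h1 ▸ h, fun h => h0 0 h rfl⟩,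
    fun ⟨h1, h0⟩ => ⟨⟨1, rfl, h1⟩, fun k hk hk0 => h0 (hk0 ▸ hk)⟩⟩

theorem lambdaNum_eq_one_iff {s t : V} :
    lambdaNum G s t = 1 ↔ (∃ v, IsSeparator G s t {v}) ∧ G.Reachable s t := by
  rw [lambdaNum, sInf_natCast_eq_one_iff, ← isSeparator_empty_iff.not_left]
  simp only [Finset.card_eq_one]
  exact ⟨fun ⟨⟨_, ⟨v, rfl⟩, h⟩, h0⟩ => ⟨⟨v, h⟩, fun h => h0 ∅ h rfl⟩,
    fun ⟨⟨v, h⟩, h0⟩ =>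
      ⟨⟨{v}, ⟨v, rfl⟩, h⟩, fun S hS hS0 => h0 (Finset.card_eq_zero.1 hS0 ▸ hS)⟩⟩

end Rendezvous

open Rendezvous

theorem dNum_eq_one_iff_lambda_eq_one_general {V : Type*} (G : SimpleGraph V) (s t : V) :
    dNum G s t = 1 ↔ lambdaNum G s t = 1 := by
  rw [dNum_eq_one_iff, lambdaNum_eq_one_iff]
  exact ⟨fun ⟨h, hr⟩ => ⟨exists_isSeparator_singleton_of_dividerWins_one hr h, hr⟩,
    fun ⟨⟨v, hv⟩, hr⟩ => ⟨dividerWins_one_of_isSeparator hv, hr⟩⟩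

/-- for a connected graph `G` and distinct nonadjacent vertices `s`, `t`,
`d_G(s,t) = 1` if and only if `λ_G(s,t) = 1`. -/
theorem dNum_eq_one_iff_lambda_eq_one {V : Type*} (G : SimpleGraph V)
    (hconn : G.Connected) (s t : V) (hst : s ≠ t) (hadj : ¬ G.Adj s t) :
    dNum G s t = 1 ↔ lambdaNum G s t = 1 :=
  dNum_eq_one_iff_lambda_eq_one_general G s t
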